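/- arXiv:1204.6728 — 6 statements merged into one kernel-verified Lean document; each statement's English description precedes it below -/
import Mathlib

section
/- Let M be a nonnegative irreducible square matrix with integer entries whose Perron–Frobenius eigenvalue equals 1. Then M is a permutation matrix. -/
/-- A nonnegative integer irreducible square matrix whose Perron–Frobenius eigenvalue
equals `1` (witnessed by a positive left eigenvector with eigenvalue `1`) is a
permutation matrix. -/
theorem irreducible_pf_one_is_permutation {k : ℕ}
    (M : Matrix (Fin k) (Fin k) ℕ)
    (hirr : ∀ i j : Fin k, ∃ n : ℕ, 0 < n ∧ 0 < (M ^ n) i j)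
    (v : Fin k → ℝ) (hv : ∀ i, 0 < v i)
    (heig : ∀ j : Fin k, (∑ i : Fin k, v i * (M i j : ℝ)) = v j) :
    ∃ σ : Equiv.Perm (Fin k), ∀ i j : Fin k, M i j = if σ i = j then 1 else 0 := by
  classical
  -- every row is nonzero
  have hrow : ∀ i, ∃ j, 0 < M i j := by
    intro i
    by_contra h
    push_neg at h
    have hz : ∀ j, M i j = 0 := fun j => Nat.le_antisymm (h j) (Nat.zero_le _)
    obtain ⟨n, hn, hpos⟩ := hirr i i
    obtain ⟨m, rfl⟩ := Nat.exists_eq_succ_of_ne_zero hn.ne'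
    have h0 : (M ^ (m + 1)) i i = 0 := by
      rw [pow_succ']
      simp [Matrix.mul_apply, hz]
    exact hpos.ne' h0
  -- every column is nonzero
  have hcol : ∀ j, ∃ i, 0 < M i j := by
    intro j
    by_contra h
    push_neg at h
    have hz : ∀ i, M i j = 0 := fun i => Nat.le_antisymm (h i) (Nat.zero_le _)
    obtain ⟨n, hn, hpos⟩ := hirr j j
    obtain ⟨m, rfl⟩ := Nat.exists_eq_succ_of_ne_zero hn.ne'
    have h0 : (M ^ (m + 1)) j j = 0 := by
      rw [pow_succ]
      simp [Matrix.mul_apply, hz]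
    exact hpos.ne' h0
  set r : Fin k → ℕ := fun i => ∑ j, M i j with hrdef
  have hr1 : ∀ i, 1 ≤ r i := by
    intro i
    obtain ⟨j, hj⟩ := hrow i
    calc (1 : ℕ) ≤ M i j := hj
      _ ≤ r i := Finset.single_le_sum (fun _ _ => Nat.zero_le _) (Finset.mem_univ j)
  -- row sums are all 1
  have hsum0 : ∑ i, v i * ((r i : ℝ) - 1) = 0 := by
    have h1 : ∑ j, ∑ i, v i * (M i j : ℝ) = ∑ j, v j :=
      Finset.sum_congr rfl fun j _ => heig j
    rw [Finset.sum_comm] at h1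
    have h2 : ∀ i : Fin k, ∑ j, v i * (M i j : ℝ) = v i * (r i : ℝ) := by
      intro i
      rw [← Finset.mul_sum, hrdef]
      push_cast
      ring
    rw [Finset.sum_congr rfl fun i _ => h2 i] at h1
    have : ∑ i, v i * ((r i : ℝ) - 1) = (∑ i, v i * (r i : ℝ)) - ∑ i, v i := by
      rw [← Finset.sum_sub_distrib]
      congr 1; ext i; ring
    rw [this, h1, sub_self]
  have hreq : ∀ i, r i = 1 := by
    intro i
    have hnn : ∀ i ∈ Finset.univ, (0 : ℝ) ≤ v i * ((r i : ℝ) - 1) := by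
      intro i _
      have : (1 : ℝ) ≤ (r i : ℝ) := by exact_mod_cast hr1 i
      exact mul_nonneg (hv i).le (by linarith)
    have := (Finset.sum_eq_zero_iff_of_nonneg hnn).mp hsum0 i (Finset.mem_univ i)
    have h3 : (r i : ℝ) - 1 = 0 := by
      rcases mul_eq_zero.mp this with h | h
      · exact absurd h (hv i).ne'
      · exact h
    have : (r i : ℝ) = 1 := by linarith
    exact_mod_cast this
  -- each row has a unique nonzero entry, equal to 1
  have huniq : ∀ i, ∃ j, M i j = 1 ∧ ∀ j', j' ≠ j → M i j' = 0 := by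
    intro i
    obtain ⟨j, hj⟩ := hrow i
    have hle : M i j ≤ r i :=
      Finset.single_le_sum (fun _ _ => Nat.zero_le _) (Finset.mem_univ j)
    have hMj : M i j = 1 := by
      have := hreq i; omega
    refine ⟨j, hMj, fun j' hne => ?_⟩
    have hsub : ({j', j} : Finset (Fin k)) ⊆ Finset.univ := Finset.subset_univ _
    have hle2 : M i j' + M i j ≤ r i := by
      have := Finset.sum_le_sum_of_subset (f := fun l => M i l) hsub
      rwa [Finset.sum_pair hne] at this
    have := hreq i; omega
  let σ0 : Fin k → Fin k := fun i => (huniq i).choose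
  have hσ1 : ∀ i, M i (σ0 i) = 1 := fun i => (huniq i).choose_spec.1
  have hσ0 : ∀ i j, j ≠ σ0 i → M i j = 0 := fun i => (huniq i).choose_spec.2
  have hsurj : Function.Surjective σ0 := by
    intro j
    obtain ⟨i, hi⟩ := hcol j
    refine ⟨i, ?_⟩
    by_contra hne
    have := hσ0 i j (fun h => hne h.symm)
    omega
  have hbij : Function.Bijective σ0 :=
    ⟨Finite.injective_iff_surjective.mpr hsurj, hsurj⟩
  refine ⟨Equiv.ofBijective σ0 hbij, fun i j => ?_⟩
  by_cases h : σ0 i = j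
  · simp only [Equiv.ofBijective_apply, h, if_pos rfl]
    rw [← h]; exact hσ1 i
  · simp only [Equiv.ofBijective_apply, h, if_neg h]
    exact hσ0 i j (fun hh => h hh.symm)
end

section
/- Let Γ be a connected locally finite graph. Suppose the edges of Γ can be directed so that at all but finitely many vertices there is at most one outwardly directed edge. Then the fundamental group of Γ is finitely generated (Γ has finite rank). -/
open Set Function

/-!
Take a breadth-first spanning tree rooted at `r` and call `s(v, par v)` the parent edge of `v`.
At a vertex `v ≠ r` with at most one outgoing edge, an outgoing edge other than the parent edge
forces the parent edge to point from `par v` to `v`. So `e ↦ (parent edge of the tail of e)`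
maps edges that are not the parent edge of their own tail to edges of the same kind, injectively
and with the tail moving one step closer to `r`, until the tail is `r` or has two outgoing
edges. Iterating it from a non-tree edge lands in the finite set of edges at such exceptional
vertices, and distinct non-tree edges, lying outside its image, land at distinct edges.
-/

theorem Set.InjOn.eq_of_iterate_eq {α : Type*} {f : α → α} {S : Set α} (hf : InjOn f S) :
    ∀ {n : ℕ} {a b : α}, (∀ i < n, f^[i] a ∈ S ∧ f^[i] b ∈ S) → f^[n] a = f^[n] b → a = b
  | 0, _, _, _, h => h
  | n + 1, _, _, hS, h =>
    hf (hS 0 n.succ_pos).1 (hS 0 n.succ_pos).2 <|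
      hf.eq_of_iterate_eq (fun i hi => hS (i + 1) (by omega)) h

theorem Set.Finite.of_injOn_descent {α : Type*} {f : α → α} {D A N : Set α} (h : α → ℕ)
    (hA : A.Finite) (hmaps : MapsTo f (D \ A) D) (hinj : InjOn f (D \ A))
    (hdesc : ∀ x ∈ D \ A, h (f x) < h x) (hND : N ⊆ D) (hN : Disjoint N (f '' (D \ A))) :
    N.Finite := by
  have hland : ∀ x ∈ D, ∃ n, f^[n] x ∈ A ∧ ∀ i < n, f^[i] x ∈ D \ A := by
    intro x
    induction hx : h x using Nat.strong_induction_on generalizing x with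
    | _ m ih =>
      intro hxD
      by_cases hxA : x ∈ A
      · exact ⟨0, hxA, fun i hi => absurd hi i.not_lt_zero⟩
      obtain ⟨n, hnA, hn⟩ := ih _ (hx ▸ hdesc x ⟨hxD, hxA⟩) (f x) rfl (hmaps ⟨hxD, hxA⟩)
      refine ⟨n + 1, hnA, fun i hi => ?_⟩
      cases i with
      | zero => exact ⟨hxD, hxA⟩
      | succ i => exact hn i (by omega)
  choose! n hnA hn using hland
  have hland_inj : ∀ x ∈ N, ∀ y ∈ N, f^[n x] x = f^[n y] y → n x ≤ n y → x = y := by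
    intro x hx y hy hxy hle
    obtain ⟨k, hk⟩ := Nat.exists_eq_add_of_le hle
    have hx_eq : x = f^[k] y := by
      refine hinj.eq_of_iterate_eq (fun i hi => ⟨hn x (hND hx) i hi, ?_⟩) ?_
      · rw [← iterate_add_apply]; exact hn y (hND hy) _ (by omega)
      · rwa [← iterate_add_apply, ← hk]
    cases k with
    | zero => exact hx_eq
    | succ k =>
      refine absurd ⟨_, hn y (hND hy) k (by omega), ?_⟩ (hN.notMem_of_mem_left hx)
      rw [hx_eq, iterate_succ_apply']
  refine (hA.subset ?_).of_finite_image (f := fun x => f^[n x] x) ?_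
  · rintro _ ⟨x, hx, rfl⟩
    exact hnA x (hND hx)
  · intro x hx y hy hxy
    rcases le_total (n x) (n y) with hle | hle
    exacts [hland_inj x hx y hy hxy hle, (hland_inj y hy x hx hxy.symm hle).symm]

namespace SimpleGraph

variable {V : Type*}

def parentGraph (par : V → V) : SimpleGraph V := fromEdgeSet (range fun v => s(v, par v))

theorem parentGraph_adj {par : V → V} {v w : V} :
    (parentGraph par).Adj v w ↔ v ≠ w ∧ (w = par v ∨ v = par w) := by
  simp only [parentGraph, fromEdgeSet_adj, mem_range, Sym2.eq_iff]
  grind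

section Parent

variable {par : V → V} {ρ : V → ℕ} {r : V}

theorem eq_of_mk_par_eq (hr : par r = r) (hρ : ∀ v ≠ r, ρ (par v) < ρ v) {v w : V} (hv : v ≠ r)
    (h : s(v, par v) = s(w, par w)) : v = w := by
  rcases Sym2.eq_iff.mp h with ⟨hvw, -⟩ | ⟨hvw, hwv⟩
  · exact hvw
  · have hw : w ≠ r := by rintro rfl; exact hv (hvw.trans hr)
    have h₁ := hρ v hv
    have h₂ := hρ w hw
    rw [hwv] at h₁
    rw [← hvw] at h₂
    omega

theorem reachable_parentGraph (hρ : ∀ v ≠ r, ρ (par v) < ρ v) (v : V) :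
    (parentGraph par).Reachable v r := by
  induction hv : ρ v using Nat.strong_induction_on generalizing v with
  | _ n ih =>
    by_cases hvr : v = r
    · rw [hvr]
    have hadj : (parentGraph par).Adj v (par v) :=
      parentGraph_adj.mpr ⟨fun h => (hρ v hvr).ne (by rw [← h]), Or.inl rfl⟩
    exact hadj.reachable.trans (ih _ (hv ▸ hρ v hvr) _ rfl)

theorem isAcyclic_parentGraph (hr : par r = r) (hρ : ∀ v ≠ r, ρ (par v) < ρ v) :
    (parentGraph par).IsAcyclic := by
  classical
  intro v c hc
  obtain ⟨u, hu, hmax⟩ := c.support.toFinset.exists_max_image ρ ⟨v, by simp⟩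
  rw [List.mem_toFinset] at hu
  have hc' := hc.rotate hu
  -- `u` maximises `ρ` on the cycle, so both of its neighbours on the cycle are `par u`.
  have hpar : ∀ w ∈ (c.rotate u hu).support, (parentGraph par).Adj u w → w = par u := by
    intro w hw hadj
    have hle := hmax w (by simpa using hw)
    rcases (parentGraph_adj.mp hadj).2 with h | h
    · exact h
    · have hw : w ≠ r := by rintro rfl; exact (parentGraph_adj.mp hadj).1 (h.trans hr)
      have := hρ w hw
      rw [← h] at this
      omega
  refine hc'.snd_ne_penultimate ((hpar _ ?_ (Walk.adj_snd hc'.not_nil)).trans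
    (hpar _ ?_ (Walk.adj_penultimate hc'.not_nil).symm).symm)
  · exact (c.rotate u hu).getVert_mem_support 1
  · exact (c.rotate u hu).getVert_mem_support _

theorem isTree_parentGraph (hr : par r = r) (hρ : ∀ v ≠ r, ρ (par v) < ρ v) :
    (parentGraph par).IsTree where
  connected := have : Nonempty V := ⟨r⟩
    .mk fun v w => (reachable_parentGraph hρ v).trans (reachable_parentGraph hρ w).symm
  isAcyclic := isAcyclic_parentGraph hr hρ

theorem parentGraph_le {G : SimpleGraph V} (hr : par r = r) (hadj : ∀ v ≠ r, G.Adj v (par v)) :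
    parentGraph par ≤ G := by
  intro v w h
  obtain ⟨hvw, rfl | rfl⟩ := parentGraph_adj.mp h
  · exact hadj v (by rintro rfl; exact hvw hr.symm)
  · exact (hadj w (by rintro rfl; exact hvw hr)).symm

end Parent

theorem Connected.exists_adj_dist_lt {G : SimpleGraph V} (hG : G.Connected) {v r : V}
    (hv : v ≠ r) : ∃ w, G.Adj v w ∧ G.dist w r < G.dist v r := by
  obtain ⟨p, hp⟩ := hG.exists_walk_length_eq_dist v r
  cases p with
  | nil => exact absurd rfl hv
  | cons h q => exact ⟨_, h, by simpa [← hp] using dist_le q⟩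

theorem Connected.exists_parent {G : SimpleGraph V} (hG : G.Connected) (r : V) :
    ∃ par : V → V, par r = r ∧ ∀ v ≠ r, G.Adj v (par v) ∧ G.dist (par v) r < G.dist v r := by
  classical
  refine ⟨fun v => if hv : v = r then r else (hG.exists_adj_dist_lt hv).choose, by simp,
    fun v hv => ?_⟩
  simpa [hv] using (hG.exists_adj_dist_lt hv).choose_spec

section Orientation

variable {G : SimpleGraph V} {tail : Sym2 V → V} {par : V → V} {ρ : V → ℕ} {r : V}

theorem tail_mk_par_eq (hadj : ∀ v ≠ r, G.Adj v (par v)) (htail : ∀ e ∈ G.edgeSet, tail e ∈ e)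
    {e : Sym2 V} (he : e ∈ G.edgeSet) (hne : e ≠ s(tail e, par (tail e))) (hr : tail e ≠ r)
    (hsub : (G.edgeSet ∩ tail ⁻¹' {tail e}).Subsingleton) :
    tail s(tail e, par (tail e)) = par (tail e) := by
  have hpe : s(tail e, par (tail e)) ∈ G.edgeSet := hadj _ hr
  rcases Sym2.mem_iff.mp (htail _ hpe) with h | h
  · exact absurd (hsub ⟨he, rfl⟩ ⟨hpe, h⟩) hne
  · exact h

theorem finite_edgeSet_sdiff_parentGraph (hlf : ∀ v, (G.neighborSet v).Finite)
    (htail : ∀ e ∈ G.edgeSet, tail e ∈ e)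
    (hB : {v | ¬(G.edgeSet ∩ tail ⁻¹' {v}).Subsingleton}.Finite)
    (hr : par r = r) (hadj : ∀ v ≠ r, G.Adj v (par v)) (hρ : ∀ v ≠ r, ρ (par v) < ρ v) :
    (G.edgeSet \ (parentGraph par).edgeSet).Finite := by
  set B := {v | ¬(G.edgeSet ∩ tail ⁻¹' {v}).Subsingleton}
  set next : Sym2 V → Sym2 V := fun e => s(tail e, par (tail e))
  set D := {e ∈ G.edgeSet | e ≠ next e}
  set A := G.edgeSet ∩ tail ⁻¹' insert r B
  have hA : A.Finite := by
    have hinc v : (G.incidenceSet v).Finite := by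
      classical
      have := (hlf v).to_subtype
      exact Finite.of_equiv _ (G.incidenceSetEquivNeighborSet v).symm
    refine ((hB.insert r).biUnion fun v _ => hinc v).subset ?_
    rintro e ⟨he, hv⟩
    exact mem_biUnion hv ⟨he, htail e he⟩
  have hgood : ∀ e ∈ D \ A, tail e ≠ r ∧ (G.edgeSet ∩ tail ⁻¹' {tail e}).Subsingleton := by
    rintro e ⟨⟨he, -⟩, hA⟩
    exact ⟨fun h => hA ⟨he, .inl h⟩, not_not.mp fun h => hA ⟨he, .inr h⟩⟩
  have hnext : ∀ e ∈ D \ A, tail (next e) = par (tail e) := fun e he =>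
    tail_mk_par_eq hadj htail he.1.1 he.1.2 (hgood e he).1 (hgood e he).2
  have hnotN : ∀ e, next e ∉ G.edgeSet \ (parentGraph par).edgeSet := by
    intro e ⟨he, hT⟩
    by_cases hv : tail e = r
    · simp [next, hv, hr] at he
    · exact hT (parentGraph_adj.mpr ⟨G.ne_of_adj (hadj _ hv), Or.inl rfl⟩)
  refine Finite.of_injOn_descent (f := next) (D := D) (fun e => ρ (tail e)) hA ?_ ?_ ?_ ?_ ?_
  · intro e he
    have hv := (hgood e he).1
    refine ⟨hadj _ hv, fun h => G.ne_of_adj (hadj _ hv) ?_⟩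
    simp only [next, hnext e he] at h
    exact eq_of_mk_par_eq hr hρ hv h
  · intro e he e' he' h
    have htl : tail e = tail e' := eq_of_mk_par_eq hr hρ (hgood e he).1 h
    exact (hgood e he).2 ⟨he.1.1, rfl⟩ ⟨he'.1.1, htl.symm⟩
  · intro e he
    simpa only [hnext e he] using hρ _ (hgood e he).1
  · exact fun e he => ⟨he.1, fun h => hnotN e (h ▸ he)⟩
  · exact disjoint_right.mpr fun _ ⟨e, _, he⟩ => he ▸ hnotN e

end Orientation

theorem Connected.exists_finite_isTree_deleteEdges {G : SimpleGraph V} (hG : G.Connected)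
    (hlf : ∀ v, (G.neighborSet v).Finite) (tail : Sym2 V → V)
    (htail : ∀ e ∈ G.edgeSet, tail e ∈ e)
    (hB : {v | ¬(G.edgeSet ∩ tail ⁻¹' {v}).Subsingleton}.Finite) :
    ∃ s : Set (Sym2 V), s.Finite ∧ (G.deleteEdges s).IsTree := by
  obtain ⟨r⟩ := hG.nonempty
  obtain ⟨par, hr, hpar⟩ := hG.exists_parent r
  have hadj v hv := (hpar v hv).1
  have hρ : ∀ v ≠ r, G.dist (par v) r < G.dist v r := fun v hv => (hpar v hv).2
  refine ⟨G.edgeSet \ (parentGraph par).edgeSet,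
    finite_edgeSet_sdiff_parentGraph (ρ := (G.dist · r)) hlf htail hB hr hadj hρ, ?_⟩
  rw [deleteEdges_sdiff_eq_of_le (parentGraph_le hr hadj)]
  exact isTree_parentGraph (ρ := (G.dist · r)) hr hρ

end SimpleGraph

/-- Goldstein–Turner observation: if the edges of a connected locally finite graph can
be directed so that at all but finitely many vertices there is at most one outwardly
directed edge, then the graph has finite rank: removing a finite set of edges yields a
connected acyclic graph (a spanning tree), i.e. the fundamental group is finitely
generated. -/
theorem finite_rank_of_almost_flow {V : Type*} (G : SimpleGraph V)
    (hconn : G.Connected)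
    (hlf : ∀ v : V, (G.neighborSet v).Finite)
    (dir : G.edgeSet → V × V)
    (hdir : ∀ e : G.edgeSet, s((dir e).1, (dir e).2) = (e : Sym2 V))
    (hfin : {v : V | ∃ e₁ e₂ : G.edgeSet, e₁ ≠ e₂ ∧ (dir e₁).1 = v ∧ (dir e₂).1 = v}.Finite) :
    ∃ s : Set (Sym2 V), s.Finite ∧ (G.deleteEdges s).Connected ∧
      (G.deleteEdges s).IsAcyclic := by
  obtain ⟨r⟩ := hconn.nonempty
  set tail : Sym2 V → V := Subtype.val.extend (fun e : G.edgeSet => (dir e).1) fun _ => r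
  have htail (e : G.edgeSet) : tail e = (dir e).1 := Subtype.val_injective.extend_apply _ _ e
  have hmem (e : G.edgeSet) : (dir e).1 ∈ (e : Sym2 V) := hdir e ▸ Sym2.mem_mk_left _ _
  have hB : {v | ¬(G.edgeSet ∩ tail ⁻¹' {v}).Subsingleton}.Finite := hfin.subset fun v hv => by
    obtain ⟨e₁, ⟨he₁, hv₁⟩, e₂, ⟨he₂, hv₂⟩, hne⟩ := not_subsingleton_iff.mp hv
    exact ⟨⟨e₁, he₁⟩, ⟨e₂, he₂⟩, fun h => hne (congrArg Subtype.val h),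
      (htail ⟨e₁, he₁⟩).symm.trans hv₁, (htail ⟨e₂, he₂⟩).symm.trans hv₂⟩
  obtain ⟨s, hs, hT⟩ := hconn.exists_finite_isTree_deleteEdges hlf tail
    (fun e he => htail ⟨e, he⟩ ▸ hmem ⟨e, he⟩) hB
  exact ⟨s, hs, hT.connected, hT.isAcyclic⟩
end

section
/- Bounded cancellation: Let F and G be free groups with fixed bases and let φ : F → G be an injective homomorphism. Then there exists a constant C ≥ 0 such that for all reduced words u, v in F with u·v reduced (no cancellation between u and v), the reduced form of φ(u)φ(v) satisfies |[φ(uv)]| ≥ |[φ(u)]| + |[φ(v)]| − 2C. -/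
/-!
The Cayley graph of a free group is a tree. The Gromov product `(x | y)` based at `1`, the
length of the common prefix of the reduced words of `x` and `y`, satisfies
`|x⁻¹ y| + 2 (x | y) = |x| + |y|` and the ultrametric inequality
`(x | z) ≥ min (x | y) (y | z)`; the cancellation in `φ u * φ v` is `(φ u⁻¹ | φ v)`.

If `M` bounds the lengths of the images of the generators, the images of the prefixes of `u⁻¹`
and of `v` are two paths from `1` with steps of length at most `M`. In a tree each of them passes
within `M` of the branch point of the tripod spanned by `1`, `φ u⁻¹`, `φ v`, so there are
prefixes `x` of `u⁻¹` and `y` of `v` with `|φ (x⁻¹ y)| ≤ 2M`. The image of `φ` involves finitely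
many letters and `φ` is injective, so only finitely many elements have images of length `≤ 2M`;
hence `|x| + |y| = |x⁻¹ y| ≤ A` for a constant `A`, and the cancellation is at most
`|φ x| ≤ M A`.
-/

namespace List

theorem finite_setOf_length_le_forall_mem {γ : Type*} {S : Set γ} (hS : S.Finite) (n : ℕ) :
    {l : List γ | l.length ≤ n ∧ ∀ a ∈ l, a ∈ S}.Finite := by
  have := hS.to_subtype
  refine ((finite_length_le S n).image (map Subtype.val)).subset ?_
  rintro l ⟨hl, hlS⟩
  exact ⟨l.attachWith (· ∈ S) hlS, by simpa using hl, attachWith_map_subtype_val hlS⟩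

variable {γ : Type*} [DecidableEq γ]

def commonPrefixLength : List γ → List γ → ℕ
  | a :: l, b :: l' => if a = b then commonPrefixLength l l' + 1 else 0
  | _, _ => 0

@[simp] theorem commonPrefixLength_nil_left (l : List γ) : commonPrefixLength [] l = 0 := rfl

@[simp] theorem commonPrefixLength_nil_right (l : List γ) : commonPrefixLength l [] = 0 := by
  cases l <;> rfl

@[simp] theorem commonPrefixLength_cons_cons (a b : γ) (l l' : List γ) :
    commonPrefixLength (a :: l) (b :: l') = if a = b then commonPrefixLength l l' + 1 else 0 := rfl

theorem commonPrefixLength_self (l : List γ) : commonPrefixLength l l = l.length := by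
  induction l <;> simp [*]

theorem commonPrefixLength_comm (l l' : List γ) :
    commonPrefixLength l l' = commonPrefixLength l' l := by
  induction l generalizing l' with
  | nil => simp
  | cons a l ih => cases l' <;> simp [ih, eq_comm]

theorem min_commonPrefixLength_le (l₁ l₂ l₃ : List γ) :
    min (commonPrefixLength l₁ l₂) (commonPrefixLength l₂ l₃) ≤ commonPrefixLength l₁ l₃ := by
  induction l₂ generalizing l₁ l₃ with
  | nil => simp
  | cons b l₂ ih =>
    rcases l₁ with _ | ⟨a, l₁⟩
    · simp
    rcases l₃ with _ | ⟨c, l₃⟩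
    · simp
    have := ih l₁ l₃
    simp only [commonPrefixLength_cons_cons]
    split_ifs <;> grind

theorem commonPrefixLength_take_take_le (l l' : List γ) (i j : ℕ) :
    commonPrefixLength (l.take i) (l'.take j) ≤ commonPrefixLength l l' := by
  induction l generalizing l' i j with
  | nil => simp
  | cons a l ih => cases l' <;> cases i <;> cases j <;> simp; split_ifs <;> simp [ih]

end List

namespace FreeGroup

theorem exists_finite_forall_mem_toWord_map {α β : Type*} [DecidableEq β] [Finite α]
    (φ : FreeGroup α →* FreeGroup β) :
    ∃ S : Set (β × Bool), S.Finite ∧ ∀ f, ∀ p ∈ (φ f).toWord, p ∈ S := by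
  refine ⟨⋃ a, {p | p ∈ (φ (of a)).toWord ∨ p ∈ (φ (of a))⁻¹.toWord},
    Set.finite_iUnion fun a => (List.finite_toSet _).union (List.finite_toSet _), fun f => ?_⟩
  induction f using FreeGroup.induction_on with
  | C1 => simp
  | of a => exact fun p hp => Set.mem_iUnion.2 ⟨a, Or.inl hp⟩
  | inv_of a _ => exact fun p hp => Set.mem_iUnion.2 ⟨a, Or.inr (by rwa [← _root_.map_inv])⟩
  | mul x y hx hy =>
    intro p hp
    rw [_root_.map_mul] at hp
    rcases List.mem_append.1 ((toWord_mul_sublist _ _).mem hp) with h | h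
    exacts [hx p h, hy p h]

variable {α : Type*} [DecidableEq α]

theorem IsReduced.invRev {L : List (α × Bool)} (h : IsReduced L) : IsReduced (invRev L) := by
  rw [isReduced_iff_reduce_eq, reduce_invRev, h.reduce_eq]

theorem length_reduce_invRev_append_add_two_mul {L₁ L₂ : List (α × Bool)}
    (h₁ : IsReduced L₁) (h₂ : IsReduced L₂) :
    (reduce (invRev L₁ ++ L₂)).length + 2 * L₁.commonPrefixLength L₂ = L₁.length + L₂.length := by
  induction L₁ generalizing L₂ with
  | nil => simp [h₂.reduce_eq]
  | cons a L₁ ih =>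
    have hinv : invRev (a :: L₁) = invRev L₁ ++ [(a.1, !a.2)] := by simp [invRev]
    rcases L₂ with _ | ⟨b, L₂⟩
    · simp [reduce_invRev, h₁.reduce_eq, invRev_length]
    by_cases hab : a = b
    · subst hab
      have hstep : reduce (invRev (a :: L₁) ++ a :: L₂) = reduce (invRev L₁ ++ L₂) := by
        rw [hinv, List.append_assoc, List.singleton_append]
        exact reduce.Step.eq Red.Step.not_rev
      have := ih (L₂ := L₂) (List.IsChain.tail h₁) (List.IsChain.tail h₂)
      simp only [hstep, List.commonPrefixLength_cons_cons, if_true, List.length_cons]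
      omega
    · have hred : IsReduced (invRev (a :: L₁) ++ b :: L₂) := by
        rw [hinv]
        refine IsReduced.append_overlap (hinv ▸ h₁.invRev) ?_ (List.cons_ne_nil _ _)
        refine isReduced_cons_cons.2 ⟨fun h => ?_, h₂⟩
        obtain ⟨a₁, a₂⟩ := a
        obtain ⟨b₁, b₂⟩ := b
        simp only at h ⊢
        subst h
        cases a₂ <;> cases b₂ <;> simp_all
      simp [hred.reduce_eq, hab, invRev_length]

/-- The Gromov product `(x | y)` based at `1` in the Cayley tree of `FreeGroup α`. -/
def gromovProduct (x y : FreeGroup α) : ℕ := x.toWord.commonPrefixLength y.toWord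

theorem norm_inv_mul_add_two_mul_gromovProduct (x y : FreeGroup α) :
    (x⁻¹ * y).norm + 2 * gromovProduct x y = x.norm + y.norm := by
  rw [norm, toWord_mul, toWord_inv]
  exact length_reduce_invRev_append_add_two_mul isReduced_toWord isReduced_toWord

theorem gromovProduct_comm (x y : FreeGroup α) : gromovProduct x y = gromovProduct y x :=
  List.commonPrefixLength_comm _ _

@[simp] theorem gromovProduct_self (x : FreeGroup α) : gromovProduct x x = x.norm :=
  List.commonPrefixLength_self _

theorem min_gromovProduct_le (x y z : FreeGroup α) :
    min (gromovProduct x y) (gromovProduct y z) ≤ gromovProduct x z :=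
  List.min_commonPrefixLength_le _ _ _

theorem gromovProduct_le_norm_left (x y : FreeGroup α) : gromovProduct x y ≤ x.norm := by
  have h₁ := norm_inv_mul_add_two_mul_gromovProduct x y
  have h₂ : y.norm ≤ x.norm + (x⁻¹ * y).norm := by
    simpa [norm_inv_eq] using norm_mul_le x (x⁻¹ * y)
  omega

def initialSegment (x : FreeGroup α) (i : ℕ) : FreeGroup α := mk (x.toWord.take i)

theorem toWord_initialSegment (x : FreeGroup α) (i : ℕ) :
    (x.initialSegment i).toWord = x.toWord.take i :=
  (isReduced_toWord.infix (x.toWord.take_prefix i).isInfix).reduce_eq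

@[simp] theorem initialSegment_zero (x : FreeGroup α) : x.initialSegment 0 = 1 := by
  simp [initialSegment, one_eq_mk]

@[simp] theorem initialSegment_norm (x : FreeGroup α) : x.initialSegment x.norm = x := by
  simp [initialSegment, norm, mk_toWord]

theorem norm_inv_initialSegment_mul_succ_le (x : FreeGroup α) (i : ℕ) :
    ((x.initialSegment i)⁻¹ * x.initialSegment (i + 1)).norm ≤ 1 := by
  rw [initialSegment, initialSegment, List.take_add, ← mul_mk, inv_mul_cancel_left]
  exact norm_mk_le.trans (by simp)

theorem gromovProduct_initialSegment_le (x y : FreeGroup α) (i j : ℕ) :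
    gromovProduct (x.initialSegment i) (y.initialSegment j) ≤ gromovProduct x y := by
  rw [gromovProduct, toWord_initialSegment, toWord_initialSegment]
  exact List.commonPrefixLength_take_take_le _ _ _ _

def IsCoarsePath (M k : ℕ) (P : ℕ → FreeGroup α) : Prop :=
  ∀ i < k, ((P i)⁻¹ * P (i + 1)).norm ≤ M

theorem isCoarsePath_initialSegment (x : FreeGroup α) (k : ℕ) :
    IsCoarsePath 1 k x.initialSegment :=
  fun i _ => x.norm_inv_initialSegment_mul_succ_le i

theorem IsCoarsePath.map {β : Type*} [DecidableEq β] {N M k : ℕ} {P : ℕ → FreeGroup α}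
    (hP : IsCoarsePath N k P) (φ : FreeGroup α →* FreeGroup β)
    (hφ : ∀ f, (φ f).norm ≤ M * f.norm) : IsCoarsePath (M * N) k (φ ∘ P) := fun i hi => by
  have := (hφ _).trans (Nat.mul_le_mul_left M (hP i hi))
  simpa only [Function.comp_apply, _root_.map_mul, _root_.map_inv] using this

/-- A coarse path from `1` to `P k` comes within `M` of the point at distance `t` along the
geodesic from `1` to `P k`. -/
theorem IsCoarsePath.exists_near_geodesic {M k t : ℕ} {P : ℕ → FreeGroup α}
    (hP : IsCoarsePath M k P) (h0 : P 0 = 1) (ht : t ≤ (P k).norm) :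
    ∃ i, t ≤ gromovProduct (P i) (P k) ∧ (P i).norm ≤ t + M := by
  have hk : t ≤ gromovProduct (P k) (P k) := by simpa using ht
  have hex : ∃ i, t ≤ gromovProduct (P i) (P k) := ⟨k, hk⟩
  have hspec := Nat.find_spec hex
  have hle := Nat.find_min' hex hk
  refine ⟨Nat.find hex, hspec, ?_⟩
  rcases hfind : Nat.find hex with _ | i
  · simp [h0]
  -- `P (i + 1)` is the first point whose word shares `t` letters with that of `P k`, so by the
  -- ultrametric inequality `(P i | P (i + 1)) < t`: the step from `P i` crosses the point at
  -- distance `t`.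
  · have hmin : ¬t ≤ gromovProduct (P i) (P k) := Nat.find_min hex (by omega)
    rw [hfind] at hspec
    have hultra := min_gromovProduct_le (P i) (P (i + 1)) (P k)
    have hnorm := norm_inv_mul_add_two_mul_gromovProduct (P i) (P (i + 1))
    have htri : (P (i + 1)).norm ≤ (P i).norm + ((P i)⁻¹ * P (i + 1)).norm := by
      simpa using norm_mul_le (P i) ((P i)⁻¹ * P (i + 1))
    have hstep := hP i (by omega)
    omega

theorem IsCoarsePath.exists_close {M k l : ℕ} {P Q : ℕ → FreeGroup α}
    (hP : IsCoarsePath M k P) (hQ : IsCoarsePath M l Q) (hP0 : P 0 = 1) (hQ0 : Q 0 = 1) :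
    ∃ i j, gromovProduct (P k) (Q l) ≤ (P i).norm ∧ ((P i)⁻¹ * Q j).norm ≤ 2 * M := by
  set t := gromovProduct (P k) (Q l)
  obtain ⟨i, hPi, hPi_norm⟩ :=
    hP.exists_near_geodesic hP0 (gromovProduct_le_norm_left (P k) (Q l))
  obtain ⟨j, hQj, hQj_norm⟩ := hQ.exists_near_geodesic hQ0
    ((gromovProduct_comm (P k) (Q l)).trans_le (gromovProduct_le_norm_left (Q l) (P k)))
  have hPQ : t ≤ gromovProduct (P i) (Q j) := by
    have h₁ := min_gromovProduct_le (P i) (P k) (Q j)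
    have h₂ := min_gromovProduct_le (P k) (Q l) (Q j)
    rw [gromovProduct_comm (Q l)] at h₂
    omega
  have hnorm := norm_inv_mul_add_two_mul_gromovProduct (P i) (Q j)
  exact ⟨i, j, hPi.trans (gromovProduct_le_norm_left _ _), by omega⟩

variable {β : Type*} [DecidableEq β] [Finite α]

theorem exists_norm_map_le_mul_norm (φ : FreeGroup α →* FreeGroup β) :
    ∃ M, ∀ f, (φ f).norm ≤ M * f.norm := by
  obtain ⟨M, hM⟩ := (Set.finite_range fun a => (φ (of a)).norm).bddAbove
  have hletter : ∀ p : α × Bool, (φ (mk [p])).norm ≤ M := by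
    rintro ⟨a, _ | _⟩
    · rw [show mk [(a, false)] = (of a)⁻¹ by simp [of, inv_mk, invRev], _root_.map_inv,
        norm_inv_eq]
      exact hM ⟨a, rfl⟩
    · exact hM ⟨a, rfl⟩
  have hword : ∀ L : List (α × Bool), (φ (mk L)).norm ≤ M * L.length := by
    intro L
    induction L with
    | nil => simp [← one_eq_mk]
    | cons p L ih =>
      rw [show mk (p :: L) = mk [p] * mk L by rw [mul_mk]; rfl, _root_.map_mul, List.length_cons]
      grind [norm_mul_le, hletter p]
  refine ⟨M, fun f => ?_⟩
  have := hword f.toWord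
  rwa [mk_toWord] at this

theorem exists_norm_le_of_norm_map_le {φ : FreeGroup α →* FreeGroup β}
    (hφ : Function.Injective φ) (K : ℕ) : ∃ A, ∀ f, (φ f).norm ≤ K → f.norm ≤ A := by
  obtain ⟨S, hS, hφS⟩ := exists_finite_forall_mem_toWord_map φ
  have hfin : {f | (φ f).norm ≤ K}.Finite := by
    refine Set.Finite.of_finite_image (f := fun f => (φ f).toWord)
      ((List.finite_setOf_length_le_forall_mem hS K).subset ?_) (toWord_injective.comp hφ).injOn
    rintro _ ⟨f, hf, rfl⟩
    exact ⟨hf, hφS f⟩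
  obtain ⟨A, hA⟩ := (hfin.image norm).bddAbove
  exact ⟨A, fun f hf => hA ⟨f, hf, rfl⟩⟩

theorem exists_gromovProduct_map_le {φ : FreeGroup α →* FreeGroup β}
    (hφ : Function.Injective φ) :
    ∃ C, ∀ x y, gromovProduct x y = 0 → gromovProduct (φ x) (φ y) ≤ C := by
  obtain ⟨M, hM⟩ := exists_norm_map_le_mul_norm φ
  obtain ⟨A, hA⟩ := exists_norm_le_of_norm_map_le hφ (2 * M)
  refine ⟨M * A, fun x y hxy => ?_⟩
  have hpath (z : FreeGroup α) : IsCoarsePath M z.norm (φ ∘ z.initialSegment) := by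
    simpa using (z.isCoarsePath_initialSegment z.norm).map φ hM
  obtain ⟨i, j, hclose, hdist⟩ := (hpath x).exists_close (hpath y) (by simp) (by simp)
  simp only [Function.comp_apply, initialSegment_norm, ← _root_.map_inv, ← _root_.map_mul]
    at hclose hdist
  have hsum : (x.initialSegment i).norm + (y.initialSegment j).norm ≤ A := by
    have := norm_inv_mul_add_two_mul_gromovProduct (x.initialSegment i) (y.initialSegment j)
    have := gromovProduct_initialSegment_le x y i j
    have := hA _ hdist
    omega
  calc gromovProduct (φ x) (φ y) ≤ (φ (x.initialSegment i)).norm := hclose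
    _ ≤ M * (x.initialSegment i).norm := hM _
    _ ≤ M * A := Nat.mul_le_mul_left M (by omega)

end FreeGroup

/-- Bounded cancellation (Grayson–Thurston/Cooper): for an injective homomorphism
`φ` between free groups with fixed bases (the domain of finite rank), there is a
constant `C` such that whenever the product `u * v` is reduced (lengths add), one has
`|φ(uv)| ≥ |φ(u)| + |φ(v)| − 2C`. -/
theorem bounded_cancellation {α β : Type*} [Fintype α] [DecidableEq α] [DecidableEq β]
    (φ : FreeGroup α →* FreeGroup β) (hφ : Function.Injective φ) :
    ∃ C : ℕ, ∀ u v : FreeGroup α,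
      (u * v).norm = u.norm + v.norm →
      ((φ u).norm : ℤ) + ((φ v).norm : ℤ) - 2 * (C : ℤ) ≤ ((φ (u * v)).norm : ℤ) := by
  obtain ⟨C, hC⟩ := FreeGroup.exists_gromovProduct_map_le hφ
  refine ⟨C, fun u v huv => ?_⟩
  have hdom := FreeGroup.norm_inv_mul_add_two_mul_gromovProduct u⁻¹ v
  have himg := FreeGroup.norm_inv_mul_add_two_mul_gromovProduct (φ u⁻¹) (φ v)
  rw [inv_inv, FreeGroup.norm_inv_eq, huv] at hdom
  rw [map_inv, inv_inv, ← map_mul, FreeGroup.norm_inv_eq] at himg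
  have := hC u⁻¹ v (by omega)
  rw [map_inv] at this
  omega
end

section
/- Let F be a free group with basis X, let φ be an automorphism of F with bounded cancellation constant C (i.e., |[φ(uv)]| ≥ |[φ(u)]| + |[φ(v)]| − 2C whenever uv is reduced). If p is a prefix of a reduced word q (i.e., q = p·q' reduced), and we write [φ(p)] = a·b where a is the maximal common prefix of [φ(p)] and [φ(q)], then |b| ≤ C. -/
/-!
Write `q = p * q'`, so that `φ q = φ p * φ q'`. Cancelling `[φ p] = a * b` maximally against
`[φ q']` splits `b = b₁ * c`, where `c` cancels completely. Then `a * b₁` is a common prefix of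
`[φ p]` and `[φ q]`, so `b₁ = 1` by maximality of `a`. Hence all of `b` cancels in
`φ p * φ q'`, i.e. `|φ q| = |φ p| + |φ q'| - 2 |b|`, and bounded cancellation gives `|b| ≤ C`.
-/

/-- `a` is a prefix of `x` as reduced words: `x = a * t` without cancellation. -/
def FGPrefix {α : Type*} [DecidableEq α] (a x : FreeGroup α) : Prop :=
  ∃ t : FreeGroup α, x = a * t ∧ x.norm = a.norm + t.norm

namespace FreeGroup

variable {α : Type*} [DecidableEq α]

theorem norm_mk_of_isReduced {L : List (α × Bool)} (h : IsReduced L) :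
    (mk L).norm = L.length := by
  rw [norm, toWord_mk, h.reduce_eq]

theorem norm_mul_of_isReduced_append {x y : FreeGroup α}
    (h : IsReduced (x.toWord ++ y.toWord)) : (x * y).norm = x.norm + y.norm := by
  rw [norm, toWord_mul, h.reduce_eq, List.length_append, norm, norm]

theorem exists_cancel_of_norm_mul_lt {x y : FreeGroup α} (h : (x * y).norm < x.norm + y.norm) :
    ∃ x' y' s : FreeGroup α, x = x' * s ∧ y = s⁻¹ * y' ∧
      x.norm = x'.norm + 1 ∧ y.norm = y'.norm + 1 ∧ s.norm = 1 := by
  have hx : x.toWord ≠ [] := by rw [Ne, toWord_eq_nil_iff]; rintro rfl; simp at h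
  have hy : y.toWord ≠ [] := by rw [Ne, toWord_eq_nil_iff]; rintro rfl; simp at h
  obtain ⟨L, l, hxL⟩ := x.toWord.eq_nil_or_concat'.resolve_left hx
  obtain ⟨m, M, hyM⟩ := List.exists_cons_of_ne_nil hy
  have hL : IsReduced L :=
    (isReduced_toWord (x := x)).infix (hxL ▸ (List.prefix_append L [l]).isInfix)
  have hM : IsReduced M :=
    (isReduced_toWord (x := y)).infix (hyM ▸ (List.suffix_cons m M).isInfix)
  have hlm : m = (l.1, !l.2) := by
    by_contra hne
    refine h.ne (norm_mul_of_isReduced_append ?_)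
    rw [hxL, hyM, List.append_assoc, List.singleton_append, IsReduced,
      List.isChain_append_cons_cons]
    refine ⟨hxL ▸ isReduced_toWord, fun hl₁ => ?_, hyM ▸ isReduced_toWord⟩
    by_contra hl₂
    exact hne (Prod.ext hl₁.symm (Bool.eq_not.mpr (Ne.symm hl₂)))
  refine ⟨mk L, mk M, mk [l], ?_, ?_, ?_, ?_, norm_mk_of_isReduced .singleton⟩
  · rw [mul_mk, ← hxL, mk_toWord]
  · have hinv : invRev [l] = [m] := by simp [invRev, hlm]
    rw [inv_mk, mul_mk, hinv, List.singleton_append, ← hyM, mk_toWord]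
  · rw [norm_mk_of_isReduced hL, norm, hxL, List.length_append, List.length_singleton]
  · rw [norm_mk_of_isReduced hM, norm, hyM, List.length_cons]

theorem exists_maximal_cancellation (x y : FreeGroup α) :
    ∃ x₁ c y₁ : FreeGroup α, x = x₁ * c ∧ y = c⁻¹ * y₁ ∧
      x.norm = x₁.norm + c.norm ∧ y.norm = c.norm + y₁.norm ∧
      (x * y).norm = x₁.norm + y₁.norm := by
  rcases (norm_mul_le x y).lt_or_eq with hlt | heq
  · obtain ⟨x', y', s, rfl, rfl, hx, hy, hs⟩ := exists_cancel_of_norm_mul_lt hlt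
    obtain ⟨x₁, c, y₁, rfl, rfl, hx', hy', hxy⟩ := exists_maximal_cancellation x' y'
    have hcs : (c * s).norm = c.norm + 1 := by
      have h1 := norm_mul_le c s
      have h2 := norm_mul_le x₁ (c * s)
      rw [← mul_assoc] at h2
      omega
    refine ⟨x₁, c * s, y₁, by group, by group, by omega, by omega, ?_⟩
    simpa [mul_assoc] using hxy
  · exact ⟨x, 1, y, by simp, by simp, by simp, by simp, heq⟩
termination_by x.norm
decreasing_by omega

end FreeGroup

theorem FGPrefix.of_eq_mul_mul {α : Type*} [DecidableEq α] {x y z w : FreeGroup α}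
    (hw : w = x * y * z) (hn : w.norm = x.norm + y.norm + z.norm) : FGPrefix (x * y) w :=
  ⟨z, hw, by
    have := FreeGroup.norm_mul_le x y
    have := FreeGroup.norm_mul_le (x * y) z
    rw [hw] at hn ⊢
    omega⟩

/-- If `φ` is an automorphism of a free group with bounded cancellation constant `C`,
`p` is a prefix of the reduced word `q`, and `[φ p] = a * b` where `a` is the maximal
common prefix of `[φ p]` and `[φ q]`, then `|b| ≤ C`. -/
theorem prefix_image_close {α : Type*} [DecidableEq α]
    (φ : FreeGroup α ≃* FreeGroup α) (C : ℕ)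
    (hC : ∀ u v : FreeGroup α, (u * v).norm = u.norm + v.norm →
      ((φ u).norm : ℤ) + ((φ v).norm : ℤ) - 2 * (C : ℤ) ≤ ((φ (u * v)).norm : ℤ))
    (p q : FreeGroup α) (hpq : FGPrefix p q)
    (a b : FreeGroup α) (hab : φ p = a * b)
    (hsplit : (φ p).norm = a.norm + b.norm)
    (haq : FGPrefix a (φ q))
    (hmax : ∀ a' : FreeGroup α, FGPrefix a' (φ p) → FGPrefix a' (φ q) →
      a'.norm ≤ a.norm) :
    b.norm ≤ C := by
  obtain ⟨q', rfl, hq'⟩ := hpq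
  obtain ⟨t, hφq, hφqn⟩ := haq
  have ht : t = b * φ q' := mul_left_cancel (by rw [← hφq, map_mul, hab, mul_assoc])
  obtain ⟨b₁, c, w₁, rfl, hw, hb, hwn, hbw⟩ := FreeGroup.exists_maximal_cancellation b (φ q')
  rw [ht, hbw] at hφqn
  have hp : φ p = a * b₁ * c := by rw [hab, mul_assoc]
  have hq : φ (p * q') = a * b₁ * w₁ := by rw [hφq, ht, hw]; group
  have hb₁ : b₁.norm = 0 := by
    have hmax' := hmax (a * b₁) (.of_eq_mul_mul hp (by omega)) (.of_eq_mul_mul hq (by omega))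
    have htri := FreeGroup.norm_mul_le (a * b₁) c
    rw [← hp] at htri
    omega
  have hbc := hC p q' hq'
  omega
end

section
/- Let D be a graph in which every edge is classified, relative to a 'preferable direction' assignment at alive vertices, as ordinary, repelling, or attracting, where: at each alive vertex exactly one outgoing edge direction is preferable, dead vertices have no preferable direction, and a repelling edge is one where neither of its two directions is preferable at its initial vertex. Suppose a component of D contains a closed path p = E₁⋯E_k ending at a dead vertex with all edges distinct such that α(E₁) = ω(E_s) for some s ≤ k (i.e., the component is non-contractible through the dead vertex). Then p contains a repelling edge. -/
/-- A graph given by oriented edges with an involution reversing orientation. -/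
structure DGraph where
  V : Type
  E : Type
  src : E → V
  bar : E → E
  bar_involutive : Function.Involutive bar
  bar_ne : ∀ e : E, bar e ≠ e

/-- Terminal vertex of an oriented edge. -/
def DGraph.tgt (D : DGraph) (e : D.E) : D.V := D.src (D.bar e)

/-!
If no edge were repelling, preferability would propagate backwards along the path: the last edge
ends at a dead vertex, and when the next edge is preferable at a junction, reducedness keeps the
reverse of the current edge from being preferable there. So every edge is the preferable direction
at its source, and the path cannot return to its first vertex: not at the dead endpoint, and not at
the source of a later edge, which would then have to be the first edge itself.
-/

open List

namespace DGraph

variable {D : DGraph} {pref : D.V → Option D.E}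

variable (D pref) in
def IsRepelling (e : D.E) : Prop :=
  pref (D.src e) ≠ some e ∧ pref (D.tgt e) ≠ some (D.bar e)

theorem pref_src_eq_of_not_isRepelling {e : D.E} (hrep : ¬ D.IsRepelling pref e)
    (htgt : pref (D.tgt e) ≠ some (D.bar e)) : pref (D.src e) = some e := by
  by_contra hsrc
  exact hrep ⟨hsrc, htgt⟩

theorem pref_src_eq_of_forall_not_isRepelling {es : List D.E}
    (hchain : IsChain (fun a b => D.tgt a = D.src b) es)
    (hred : IsChain (fun a b => b ≠ D.bar a) es)
    (hnorep : ∀ e ∈ es, ¬ D.IsRepelling pref e) (hne : es ≠ [])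
    (hend : pref (D.tgt (es.getLast hne)) ≠ some (D.bar (es.getLast hne))) :
    ∀ e ∈ es, pref (D.src e) = some e := by
  induction es with
  | nil => exact absurd rfl hne
  | cons e rest ih =>
    cases rest with
    | nil => simpa using pref_src_eq_of_not_isRepelling (hnorep e mem_cons_self) hend
    | cons f rest =>
      obtain ⟨hef, hchain⟩ := isChain_cons_cons.mp hchain
      obtain ⟨hfe, hred⟩ := isChain_cons_cons.mp hred
      have hrest := ih hchain hred (fun g hg => hnorep g (mem_cons_of_mem _ hg))
        (cons_ne_nil _ _) (by simpa only [getLast_cons_cons] using hend)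
      have htgt : pref (D.tgt e) ≠ some (D.bar e) := by
        rw [hef, hrest f mem_cons_self]
        exact fun h => hfe (Option.some_injective _ h)
      exact forall_mem_cons.2
        ⟨pref_src_eq_of_not_isRepelling (hnorep e mem_cons_self) htgt, hrest⟩

theorem tgt_getElem_ne_src_head {es : List D.E}
    (hchain : IsChain (fun a b => D.tgt a = D.src b) es) (hnodup : es.Nodup)
    (hpref : ∀ e ∈ es, pref (D.src e) = some e) (hne : es ≠ [])
    (hdead : pref (D.tgt (es.getLast hne)) = none) (s : ℕ) (hs : s < es.length) :
    D.tgt es[s] ≠ D.src (es.head hne) := by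
  intro hloop
  have hhead : pref (D.src (es.head hne)) = some (es.head hne) := hpref _ (head_mem hne)
  rcases Nat.lt_or_ge (s + 1) es.length with hs1 | hs1
  · have hnext : D.src es[s + 1] = D.src (es.head hne) :=
      (isChain_iff_getElem.mp hchain s hs1).symm.trans hloop
    have hsame : es[s + 1] = es[0] := by
      have := hpref _ (getElem_mem hs1)
      rw [hnext, hhead, head_eq_getElem] at this
      exact (Option.some_injective _ this).symm
    exact Nat.succ_ne_zero s (hnodup.getElem_inj_iff.mp hsame)
  · have hlast : es[s] = es.getLast hne := by
      rw [getLast_eq_getElem]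
      congr
      omega
    rw [← hlast, hloop, hhead] at hdead
    exact Option.some_ne_none _ hdead

end DGraph

theorem repelling_edge_exists_general (D : DGraph) (pref : D.V → Option D.E)
    (es : List D.E) (hne : es ≠ [])
    (hchain : List.Chain' (fun a b => D.tgt a = D.src b) es)
    (hred : List.Chain' (fun a b => b ≠ D.bar a) es)
    (hnodup : es.Nodup)
    (hdead : pref (D.tgt (es.getLast hne)) = none)
    (hloop : ∃ (s : ℕ) (hs : s < es.length),
      D.tgt (es.get ⟨s, hs⟩) = D.src (es.head hne)) :
    ∃ e ∈ es, pref (D.src e) ≠ some e ∧ pref (D.tgt e) ≠ some (D.bar e) := by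
  by_contra hnone
  have hpref_src : ∀ e ∈ es, pref (D.src e) = some e :=
    DGraph.pref_src_eq_of_forall_not_isRepelling hchain hred
      (fun e he hrep => hnone ⟨e, he, hrep.1, hrep.2⟩) hne (by simp [hdead])
  obtain ⟨s, hs, hcycle⟩ := hloop
  exact DGraph.tgt_getElem_ne_src_head hchain hnodup hpref_src hne hdead s hs hcycle

/-- Lemma 7.3: let `pref` assign to each alive vertex its unique preferable outgoing
edge (dead vertices get `none`).  If a reduced edge path `E₁ ⋯ E_k` with distinct
edges ends at a dead vertex and satisfies `α(E₁) = ω(E_s)` for some `s ≤ k`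
(non-contractibility through the dead vertex), then the path contains a repelling
edge, i.e. an edge `e` whose direction is not preferable at `α(e)` and whose reverse
is not preferable at `ω(e)`. -/
theorem repelling_edge_exists (D : DGraph) (pref : D.V → Option D.E)
    (hpref : ∀ (v : D.V) (e : D.E), pref v = some e → D.src e = v)
    (es : List D.E) (hne : es ≠ [])
    (hchain : List.Chain' (fun a b => D.tgt a = D.src b) es)
    (hred : List.Chain' (fun a b => b ≠ D.bar a) es)
    (hnodup : es.Nodup)
    (hdead : pref (D.tgt (es.getLast hne)) = none)
    (hloop : ∃ (s : ℕ) (hs : s < es.length),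
      D.tgt (es.get ⟨s, hs⟩) = D.src (es.head hne)) :
    ∃ e ∈ es, pref (D.src e) ≠ some e ∧ pref (D.tgt e) ≠ some (D.bar e) :=
  repelling_edge_exists_general D pref es hne hchain hred hnodup hdead hloop
end

section
/- Let Γ be a finite graph and f : Γ → Γ a graph map sending edges to reduced edge paths. The repelling edges of the derived graph D_f are in bijection with occurrences of edges E in the path f(E) (over all edges E of Γ), and the attracting edges of D_f are in bijection with occurrences of Ē in f(E). In particular, the number of exceptional (repelling or attracting) edges of D_f is finite, bounded by the total length of the images f(E) over all edges E. -/
/-- A graph given by oriented edges with an involution reversing orientation. -/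
structure CGraph where
  V : Type
  E : Type
  src : E → V
  bar : E → E
  bar_involutive : Function.Involutive bar
  bar_ne : ∀ e : E, bar e ≠ e

/-- Terminal vertex of an oriented edge. -/
def CGraph.tgt (Γ : CGraph) (e : Γ.E) : Γ.V := Γ.src (Γ.bar e)

/-- A list of edges is an edge path: consecutive edges are incident. -/
def CGraph.IsEdgePath (Γ : CGraph) (l : List Γ.E) : Prop :=
  List.Chain' (fun a b => Γ.tgt a = Γ.src b) l

/-- A reduced edge path: an edge path with no backtracking. -/
def CGraph.IsReduced (Γ : CGraph) (l : List Γ.E) : Prop :=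
  Γ.IsEdgePath l ∧ List.Chain' (fun a b => b ≠ Γ.bar a) l

/-- A graph map sending vertices to vertices and edges to nontrivial reduced edge
paths, compatibly with incidence and edge reversal. -/
structure GraphMap (Γ : CGraph) where
  vMap : Γ.V → Γ.V
  eMap : Γ.E → List Γ.E
  eMap_ne : ∀ e : Γ.E, eMap e ≠ []
  eMap_reduced : ∀ e : Γ.E, Γ.IsReduced (eMap e)
  eMap_src : ∀ (e a : Γ.E), (eMap e).head? = some a → Γ.src a = vMap (Γ.src e)
  eMap_bar : ∀ e : Γ.E, eMap (Γ.bar e) = ((eMap e).map Γ.bar).reverse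

/-- Free reduction of an edge path. -/
def CGraph.red (Γ : CGraph) [DecidableEq Γ.E] (l : List Γ.E) : List Γ.E :=
  l.foldr (fun a r => match r with
    | [] => [a]
    | b :: t => if b = Γ.bar a then t else a :: b :: t) []

/-- A vertex of the graph `D_f`: a reduced `f`-path `μ` based at `v`
(the trivial path at `v` requires `f(v) = v`). -/
def IsFPath (Γ : CGraph) (f : GraphMap Γ) (v : Γ.V) (μ : List Γ.E) : Prop :=
  Γ.IsReduced μ ∧ (μ = [] → f.vMap v = v) ∧
  (∀ a : Γ.E, μ.head? = some a → Γ.src a = v) ∧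
  (∀ a : Γ.E, μ.getLast? = some a → Γ.tgt a = f.vMap v)

/-- The repelling edges of `D_f`, encoded as triples `(v, μ, e)`: the `D_f`-edge with
label `e` from the vertex `μ` (based at `v`); repelling means `e` is not the first
edge of `μ` and `ē` is not the first edge of the target `[ē μ f(e)]`. -/
def RepSet (Γ : CGraph) [DecidableEq Γ.E] (f : GraphMap Γ) :
    Set (Γ.V × List Γ.E × Γ.E) :=
  {x | IsFPath Γ f x.1 x.2.1 ∧ Γ.src x.2.2 = x.1 ∧
    x.2.1.head? ≠ some x.2.2 ∧
    (Γ.red (Γ.bar x.2.2 :: (x.2.1 ++ f.eMap x.2.2))).head? ≠ some (Γ.bar x.2.2)}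

/-- The attracting edges of `D_f`: `e` is the first edge of `μ` and `ē` is the first
edge of the target `[ē μ f(e)]`. -/
def AttSet (Γ : CGraph) [DecidableEq Γ.E] (f : GraphMap Γ) :
    Set (Γ.V × List Γ.E × Γ.E) :=
  {x | IsFPath Γ f x.1 x.2.1 ∧ Γ.src x.2.2 = x.1 ∧
    x.2.1.head? = some x.2.2 ∧
    (Γ.red (Γ.bar x.2.2 :: (x.2.1 ++ f.eMap x.2.2))).head? = some (Γ.bar x.2.2)}

/-- Occurrences of the edge `e` in the path `f(e)`. -/
def OccRep (Γ : CGraph) (f : GraphMap Γ) : Set (Γ.E × ℕ) :=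
  {p | (f.eMap p.1)[p.2]? = some p.1}

/-- Occurrences of the edge `ē` in the path `f(e)`. -/
def OccAtt (Γ : CGraph) (f : GraphMap Γ) : Set (Γ.E × ℕ) :=
  {p | (f.eMap p.1)[p.2]? = some (Γ.bar p.1)}

/-!
Since `[ē ν]` starts with `ē` exactly when the reduced path `[ν]` does not start with `e`, the
`D_f`-edge `(μ, e)` is repelling iff `μ` does not start with `e` but `[μ f(e)]` does, and
attracting iff the reverse holds. Either way `μ` and `[μ f(e)]` start differently, so the
first edge of `μ` does not survive and all of `μ` cancels against an initial segment of `f(e)`: `μ` is the reverse of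
the first `n` edges of `f(e)` and `[μ f(e)] = f(e)ₙ f(e)ₙ₊₁ ⋯` (indices from `0`). Hence the edge
is repelling iff `f(e)ₙ = e`, and attracting iff `n ≥ 1` and `f(e)ₙ₋₁ = ē`.
-/

namespace CGraph

variable (Γ : CGraph)

def revPath (l : List Γ.E) : List Γ.E := (l.map Γ.bar).reverse

abbrev NoBacktrack (a b : Γ.E) : Prop := b ≠ Γ.bar a

def reduceCons [DecidableEq Γ.E] (a : Γ.E) : List Γ.E → List Γ.E
  | [] => [a]
  | b :: t => if b = Γ.bar a then t else a :: b :: t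

variable {Γ}

@[simp]
lemma bar_bar (e : Γ.E) : Γ.bar (Γ.bar e) = e := Γ.bar_involutive e

@[simp]
lemma length_revPath (l : List Γ.E) : (Γ.revPath l).length = l.length := by
  simp [revPath]

lemma revPath_eq_nil_iff {l : List Γ.E} : Γ.revPath l = [] ↔ l = [] := by
  simp [revPath]

lemma revPath_take_succ {w : List Γ.E} {n : ℕ} (hn : n < w.length) :
    Γ.revPath (w.take (n + 1)) = Γ.bar w[n] :: Γ.revPath (w.take n) := by
  rw [revPath, revPath, List.take_add_one, List.getElem?_eq_getElem hn, Option.toList_some,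
    List.map_append, List.reverse_append]
  rfl

lemma head?_revPath_take_succ {w : List Γ.E} {n : ℕ} (hn : n < w.length) :
    (Γ.revPath (w.take (n + 1))).head? = some (Γ.bar w[n]) := by
  rw [revPath_take_succ hn, List.head?_cons]

lemma getLast?_revPath (l : List Γ.E) : (Γ.revPath l).getLast? = l.head?.map Γ.bar := by
  simp [revPath, List.getLast?_reverse, List.head?_map]

lemma isChain_revPath {P : Γ.E → Γ.E → Prop} (hP : ∀ a b, P a b → P (Γ.bar b) (Γ.bar a))
    {l : List Γ.E} (h : l.IsChain P) : (Γ.revPath l).IsChain P := by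
  rw [revPath, List.isChain_reverse, List.isChain_map]
  exact h.imp fun a b => hP a b

lemma IsReduced.revPath {l : List Γ.E} (h : Γ.IsReduced l) : Γ.IsReduced (Γ.revPath l) := by
  refine ⟨isChain_revPath (fun a b hab => ?_) h.1, isChain_revPath (fun a b hab => ?_) h.2⟩
  · simp only [tgt, bar_bar] at hab ⊢
    exact hab.symm
  · show Γ.bar a ≠ Γ.bar (Γ.bar b)
    rw [bar_bar]
    exact fun h' => hab h'.symm

lemma IsReduced.take {l : List Γ.E} (h : Γ.IsReduced l) (n : ℕ) : Γ.IsReduced (l.take n) :=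
  ⟨h.1.take n, h.2.take n⟩

lemma IsEdgePath.tgt_getElem {l : List Γ.E} (h : Γ.IsEdgePath l) {n : ℕ}
    (hn : n + 1 < l.length) : Γ.tgt l[n] = Γ.src l[n + 1] :=
  List.IsChain.getElem h n hn

lemma IsReduced.getElem_succ_ne {l : List Γ.E} (h : Γ.IsReduced l) {n : ℕ}
    (hn : n + 1 < l.length) : l[n + 1] ≠ Γ.bar l[n] :=
  List.IsChain.getElem h.2 n hn

section Reduction

variable [DecidableEq Γ.E]

lemma red_cons (a : Γ.E) (l : List Γ.E) : Γ.red (a :: l) = Γ.reduceCons a (Γ.red l) := rfl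

lemma isChain_red (l : List Γ.E) : (Γ.red l).IsChain Γ.NoBacktrack := by
  induction l with
  | nil => exact List.isChain_nil
  | cons a l ih =>
    rw [red_cons]
    rcases hl : Γ.red l with _ | ⟨b, t⟩
    · exact List.isChain_singleton a
    · rw [hl] at ih
      by_cases hb : b = Γ.bar a
      · simpa [reduceCons, hb] using ih.tail
      · simpa [reduceCons, hb] using ih

lemma red_eq_self {l : List Γ.E} (h : l.IsChain Γ.NoBacktrack) : Γ.red l = l := by
  induction l with
  | nil => rfl
  | cons a l ih =>
    rw [red_cons, ih h.tail]
    cases l with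
    | nil => rfl
    | cons b t => exact if_neg (List.isChain_cons_cons.mp h).1

lemma head?_red_bar_cons (e : Γ.E) (l : List Γ.E) :
    (Γ.red (Γ.bar e :: l)).head? = some (Γ.bar e) ↔ (Γ.red l).head? ≠ some e := by
  have hl := isChain_red (Γ := Γ) l
  rw [red_cons]
  rcases hR : Γ.red l with _ | ⟨b, _ | ⟨c, t⟩⟩
  · simp [reduceCons]
  · by_cases hb : b = e <;> simp [reduceCons, hb]
  · rw [hR] at hl
    have hcb : c ≠ Γ.bar b := (List.isChain_cons_cons.mp hl).1
    by_cases hb : b = e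
    · subst hb
      simpa [reduceCons] using hcb
    · simp [reduceCons, hb]

lemma red_revPath_take_append {w : List Γ.E} (hw : w.IsChain Γ.NoBacktrack) (n : ℕ) :
    Γ.red (Γ.revPath (w.take n) ++ w) = w.drop n := by
  induction n with
  | zero => simpa [revPath] using red_eq_self hw
  | succ n ih =>
    rcases lt_or_ge n w.length with hn | hn
    · rw [revPath_take_succ hn, List.cons_append, red_cons, ih, List.drop_eq_getElem_cons hn]
      exact if_pos (bar_bar _).symm
    · have htake : w.take (n + 1) = w.take n := by
        rw [List.take_of_length_le (by omega), List.take_of_length_le hn]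
      rw [htake, ih, List.drop_of_length_le hn, List.drop_of_length_le (by omega)]

lemma eq_revPath_take_or_head?_red_append {μ w : List Γ.E} (hμ : μ.IsChain Γ.NoBacktrack)
    (hw : w.IsChain Γ.NoBacktrack) :
    (∃ n ≤ w.length, μ = Γ.revPath (w.take n)) ∨ (Γ.red (μ ++ w)).head? = μ.head? := by
  induction μ with
  | nil => exact Or.inl ⟨0, Nat.zero_le _, rfl⟩
  | cons a μ ih =>
    rw [List.cons_append, red_cons]
    rcases ih hμ.tail with ⟨n, hn, rfl⟩ | hhead
    · rw [red_revPath_take_append hw]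
      rcases hdrop : w.drop n with _ | ⟨b, t⟩
      · exact Or.inr rfl
      · have hnw : n < w.length := by
          by_contra h
          simp [List.drop_of_length_le (not_lt.mp h)] at hdrop
        have hb : w[n] = b := by
          rw [List.drop_eq_getElem_cons hnw] at hdrop
          exact (List.cons.inj hdrop).1
        by_cases hab : b = Γ.bar a
        · refine Or.inl ⟨n + 1, hnw, ?_⟩
          rw [revPath_take_succ hnw, hb, hab, bar_bar]
        · exact Or.inr (by simp [reduceCons, hab])
    · right
      rcases μ with _ | ⟨b, μ⟩
      · rw [List.nil_append, List.head?_nil, List.head?_eq_none_iff] at hhead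
        rw [List.nil_append, hhead]
        rfl
      · obtain ⟨t, ht⟩ : ∃ t, Γ.red (b :: μ ++ w) = b :: t :=
          ⟨(Γ.red (b :: μ ++ w)).tail, List.eq_cons_of_mem_head? hhead⟩
        rw [ht, reduceCons, if_neg (List.isChain_cons_cons.mp hμ).1]
        rfl

end Reduction

lemma exists_eq_bar_of_head?_revPath_take {w : List Γ.E} {n : ℕ} (hn : n ≤ w.length) {a : Γ.E}
    (ha : (Γ.revPath (w.take n)).head? = some a) :
    ∃ m, ∃ hm : m < w.length, n = m + 1 ∧ a = Γ.bar w[m] := by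
  rcases n with _ | m
  · simp [revPath] at ha
  · rw [head?_revPath_take_succ (by omega), Option.some_inj] at ha
    exact ⟨m, by omega, rfl, ha.symm⟩

lemma isFPath_revPath_take (f : GraphMap Γ) (e : Γ.E) (n : ℕ)
    (hnil : n = 0 → f.vMap (Γ.src e) = Γ.src e)
    (hhead : ∀ a, (Γ.revPath ((f.eMap e).take n)).head? = some a → Γ.src a = Γ.src e) :
    IsFPath Γ f (Γ.src e) (Γ.revPath ((f.eMap e).take n)) := by
  refine ⟨((f.eMap_reduced e).take n).revPath, fun hμ => hnil ?_, hhead, fun a ha => ?_⟩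
  · rw [revPath_eq_nil_iff, List.take_eq_nil_iff] at hμ
    exact hμ.resolve_right (f.eMap_ne e)
  · rw [getLast?_revPath, Option.map_eq_some_iff] at ha
    obtain ⟨b, hb, rfl⟩ := ha
    rw [List.head?_take] at hb
    split_ifs at hb
    rw [tgt, bar_bar]
    exact f.eMap_src e b hb

/-- The `D_f`-edge labelled `e` whose source vertex is the reverse of the first `n` edges
of `f(e)`. -/
def prefixEdge (f : GraphMap Γ) (p : Γ.E × ℕ) : Γ.V × List Γ.E × Γ.E :=
  (Γ.src p.1, Γ.revPath ((f.eMap p.1).take p.2), p.1)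

lemma prefixEdge_inj (f : GraphMap Γ) {p q : Γ.E × ℕ} (hp : p.2 ≤ (f.eMap p.1).length)
    (hq : q.2 ≤ (f.eMap q.1).length) (h : prefixEdge f p = prefixEdge f q) : p = q := by
  obtain ⟨e, n⟩ := p
  obtain ⟨e', n'⟩ := q
  obtain rfl : e = e' := congrArg (·.2.2) h
  have hlen := congrArg (·.2.1.length) h
  simp only [prefixEdge, length_revPath, List.length_take] at hp hq hlen
  exact Prod.ext rfl (by omega)

variable [DecidableEq Γ.E]

lemma prefixEdge_mem_repSet (f : GraphMap Γ) {p : Γ.E × ℕ} (hp : p ∈ OccRep Γ f) :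
    prefixEdge f p ∈ RepSet Γ f := by
  obtain ⟨e, n⟩ := p
  have hp : (f.eMap e)[n]? = some e := hp
  obtain ⟨hn, hwn⟩ := List.getElem?_eq_some_iff.mp hp
  have hw := f.eMap_reduced e
  simp only [RepSet, prefixEdge, Set.mem_ofPred_eq]
  refine ⟨isFPath_revPath_take f e n (fun h0 => ?_) (fun a ha => ?_), trivial, fun ha => ?_, ?_⟩
  · subst h0
    exact (f.eMap_src e e (by rw [List.head?_eq_getElem?, hp])).symm
  · obtain ⟨m, hm, rfl, rfl⟩ := exists_eq_bar_of_head?_revPath_take hn.le ha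
    rw [← tgt, hw.1.tgt_getElem hn, hwn]
  · obtain ⟨m, hm, rfl, he⟩ := exists_eq_bar_of_head?_revPath_take hn.le ha
    exact hw.getElem_succ_ne hn (hwn.trans he)
  · rw [Ne, head?_red_bar_cons, not_not, red_revPath_take_append hw.2, List.head?_drop, hp]

lemma prefixEdge_succ_mem_attSet (f : GraphMap Γ) {p : Γ.E × ℕ} (hp : p ∈ OccAtt Γ f) :
    prefixEdge f (p.1, p.2 + 1) ∈ AttSet Γ f := by
  obtain ⟨e, m⟩ := p
  obtain ⟨hm, hwm⟩ := List.getElem?_eq_some_iff.mp (show (f.eMap e)[m]? = _ from hp)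
  have hw := f.eMap_reduced e
  have hhead : (Γ.revPath ((f.eMap e).take (m + 1))).head? = some e := by
    rw [head?_revPath_take_succ hm, hwm, bar_bar]
  simp only [AttSet, prefixEdge, Set.mem_ofPred_eq]
  refine ⟨isFPath_revPath_take f e (m + 1) (by omega) fun a ha => ?_, trivial, hhead, ?_⟩
  · rw [hhead, Option.some_inj] at ha
    rw [ha]
  · rw [head?_red_bar_cons, red_revPath_take_append hw.2, List.head?_drop]
    intro he
    obtain ⟨hm', hwm'⟩ := List.getElem?_eq_some_iff.mp he
    exact hw.getElem_succ_ne hm' (by rw [hwm', hwm, bar_bar])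

lemma exists_prefixEdge_of_mem_repSet (f : GraphMap Γ) {x : Γ.V × List Γ.E × Γ.E}
    (hx : x ∈ RepSet Γ f) : ∃ p ∈ OccRep Γ f, prefixEdge f p = x := by
  obtain ⟨v, μ, e⟩ := x
  simp only [RepSet, Set.mem_ofPred_eq] at hx
  obtain ⟨hμ, rfl, hhead, hred⟩ := hx
  rw [Ne, head?_red_bar_cons, not_not] at hred
  rcases eq_revPath_take_or_head?_red_append hμ.1.2 (f.eMap_reduced e).2 with
    ⟨n, -, rfl⟩ | hsame
  · rw [red_revPath_take_append (f.eMap_reduced e).2, List.head?_drop] at hred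
    exact ⟨(e, n), hred, rfl⟩
  · exact absurd (hsame.symm.trans hred) hhead

lemma exists_prefixEdge_succ_of_mem_attSet (f : GraphMap Γ) {x : Γ.V × List Γ.E × Γ.E}
    (hx : x ∈ AttSet Γ f) : ∃ p ∈ OccAtt Γ f, prefixEdge f (p.1, p.2 + 1) = x := by
  obtain ⟨v, μ, e⟩ := x
  simp only [AttSet, Set.mem_ofPred_eq] at hx
  obtain ⟨hμ, rfl, hhead, hred⟩ := hx
  rw [head?_red_bar_cons] at hred
  rcases eq_revPath_take_or_head?_red_append hμ.1.2 (f.eMap_reduced e).2 with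
    ⟨n, hn, rfl⟩ | hsame
  · obtain ⟨m, hm, rfl, he⟩ := exists_eq_bar_of_head?_revPath_take hn hhead
    refine ⟨(e, m), ?_, rfl⟩
    show (f.eMap e)[m]? = some (Γ.bar e)
    rw [List.getElem?_eq_getElem hm]
    exact congrArg some ((congrArg Γ.bar he).trans (bar_bar _)).symm
  · exact absurd (hsame.trans hhead) hred

lemma bijOn_prefixEdge_occRep (f : GraphMap Γ) :
    Set.BijOn (prefixEdge f) (OccRep Γ f) (RepSet Γ f) := by
  have hlt {p : Γ.E × ℕ} (hp : p ∈ OccRep Γ f) := (List.getElem?_eq_some_iff.mp hp).1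
  exact ⟨fun p => prefixEdge_mem_repSet f,
    fun p hp q hq => prefixEdge_inj f (hlt hp).le (hlt hq).le,
    fun x => exists_prefixEdge_of_mem_repSet f⟩

lemma bijOn_prefixEdge_succ_occAtt (f : GraphMap Γ) :
    Set.BijOn (fun p => prefixEdge f (p.1, p.2 + 1)) (OccAtt Γ f) (AttSet Γ f) := by
  have hlt {p : Γ.E × ℕ} (hp : p ∈ OccAtt Γ f) := (List.getElem?_eq_some_iff.mp hp).1
  refine ⟨fun p => prefixEdge_succ_mem_attSet f, fun p hp q hq h => ?_,
    fun x => exists_prefixEdge_succ_of_mem_attSet f⟩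
  have := prefixEdge_inj f (p := (p.1, p.2 + 1)) (q := (q.1, q.2 + 1)) (hlt hp) (hlt hq) h
  simp only [Prod.mk.injEq, Nat.add_right_cancel_iff] at this
  exact Prod.ext this.1 this.2

end CGraph

lemma disjoint_occRep_occAtt {Γ : CGraph} (f : GraphMap Γ) :
    Disjoint (OccRep Γ f) (OccAtt Γ f) :=
  Set.disjoint_left.mpr fun p hrep hatt =>
    Γ.bar_ne p.1 (Option.some_inj.mp (hatt.symm.trans hrep))

section ListPositions

variable {ι α : Type*} [Fintype ι]

def listPositions (w : ι → List α) : Finset (ι × ℕ) :=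
  (Finset.univ.sigma fun i => Finset.range (w i).length).map
    (Equiv.sigmaEquivProd ι ℕ).toEmbedding

lemma mem_listPositions {w : ι → List α} {p : ι × ℕ} :
    p ∈ listPositions w ↔ p.2 < (w p.1).length := by
  simp [listPositions]

lemma card_listPositions (w : ι → List α) :
    (listPositions w).card = ∑ i, (w i).length := by
  simp [listPositions]

end ListPositions

theorem exceptional_edges_classification_general (Γ : CGraph) [DecidableEq Γ.E]
    [Fintype Γ.E] (f : GraphMap Γ) :
    Nonempty (↥(RepSet Γ f) ≃ ↥(OccRep Γ f)) ∧
    Nonempty (↥(AttSet Γ f) ≃ ↥(OccAtt Γ f)) ∧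
    (RepSet Γ f ∪ AttSet Γ f).Finite ∧
    Nat.card ↥(RepSet Γ f ∪ AttSet Γ f) ≤ ∑ e : Γ.E, (f.eMap e).length := by
  have hR := CGraph.bijOn_prefixEdge_occRep f
  have hA := CGraph.bijOn_prefixEdge_succ_occAtt f
  have hOcc : OccRep Γ f ∪ OccAtt Γ f ⊆ listPositions f.eMap := by
    rintro p (hp | hp) <;> exact mem_listPositions.mpr (List.getElem?_eq_some_iff.mp hp).1
  have hfin := (listPositions f.eMap).finite_toSet.subset hOcc
  have hRfin := hfin.subset Set.subset_union_left
  have hAfin := hfin.subset Set.subset_union_right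
  refine ⟨⟨hR.equiv.symm⟩, ⟨hA.equiv.symm⟩, ?_, ?_⟩
  · rw [← hR.image_eq, ← hA.image_eq]
    exact (hRfin.image _).union (hAfin.image _)
  · calc Nat.card ↥(RepSet Γ f ∪ AttSet Γ f) = (RepSet Γ f ∪ AttSet Γ f).ncard :=
          Nat.card_coe_set_eq _
      _ ≤ (RepSet Γ f).ncard + (AttSet Γ f).ncard := Set.ncard_union_le _ _
      _ = (OccRep Γ f ∪ OccAtt Γ f).ncard := by
          rw [← hR.ncard_eq, ← hA.ncard_eq,
            Set.ncard_union_eq (disjoint_occRep_occAtt f) hRfin hAfin]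
      _ ≤ (listPositions f.eMap : Set (Γ.E × ℕ)).ncard := Set.ncard_le_ncard hOcc
      _ = ∑ e : Γ.E, (f.eMap e).length := by rw [Set.ncard_coe_finset, card_listPositions]

/-- Proposition 7.2 (Goldstein–Turner, Turner, Cohen–Lustig): for a finite graph `Γ`
and a graph map `f` sending edges to reduced edge paths, the repelling edges of `D_f`
are in bijection with the occurrences of `E` in `f(E)` and the attracting edges with
the occurrences of `Ē` in `f(E)`; in particular the set of exceptional edges of `D_f`
is finite, of cardinality at most the total length of the images `f(E)`. -/
theorem exceptional_edges_classification (Γ : CGraph) [DecidableEq Γ.E]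
    [Fintype Γ.E] [Fintype Γ.V] (f : GraphMap Γ) :
    Nonempty (↥(RepSet Γ f) ≃ ↥(OccRep Γ f)) ∧
    Nonempty (↥(AttSet Γ f) ≃ ↥(OccAtt Γ f)) ∧
    (RepSet Γ f ∪ AttSet Γ f).Finite ∧
    Nat.card ↥(RepSet Γ f ∪ AttSet Γ f) ≤ ∑ e : Γ.E, (f.eMap e).length :=
  exceptional_edges_classification_general Γ f
end
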